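/- If A = P L D (PL)ᵀ with P a permutation matrix, L unit lower triangular, and D diagonal, then the number of negative diagonal entries of D equals the number of negative eigenvalues of A (counted with multiplicity), provided all entries of D are nonzero. -/

import Mathlib

/-!
If `diagonal d = N * diagonal e * Nᵀ` and `d` had more negative entries than `e`, a dimension
count would give `x ≠ 0` supported where `d < 0` with `Nᵀ x` vanishing where `e < 0`; then
`xᵀ (diagonal d) x < 0 ≤ (Nᵀ x)ᵀ (diagonal e) (Nᵀ x)`, although both sides are equal. For
invertible `N` this runs both ways (Sylvester's law of inertia). The spectral theorem makes
`A = (P L) D (P L)ᵀ` congruent, through the invertible `Uᵀ P L` with `U` an orthogonal matrix of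
eigenvectors, to the diagonal matrix of its eigenvalues, which are the roots of its
characteristic polynomial.
-/

open Matrix Finset

namespace Matrix

variable {ι K : Type*} [Fintype ι]

lemma dotProduct_diagonal_mulVec_self [DecidableEq ι] [CommSemiring K] (d x : ι → K) :
    x ⬝ᵥ (diagonal d *ᵥ x) = ∑ i, d i * x i ^ 2 := by
  simp only [dotProduct, mulVec_diagonal]
  exact sum_congr rfl fun i _ => by ring

lemma exists_ne_zero_forall_notMem_eq_zero_forall_mem_mulVec_eq_zero [DecidableEq ι] [Field K]
    (M : Matrix ι ι K) {S T : Finset ι} (hST : #T < #S) :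
    ∃ x : ι → K, x ≠ 0 ∧ (∀ i ∉ S, x i = 0) ∧ ∀ j ∈ T, (M *ᵥ x) j = 0 := by
  let f : (ι → K) →ₗ[K] (T → K) × ((Sᶜ : Finset ι) → K) :=
    (LinearMap.funLeft K K Subtype.val ∘ₗ M.mulVecLin).prod (LinearMap.funLeft K K Subtype.val)
  have hdim : Module.finrank K ((T → K) × ((Sᶜ : Finset ι) → K)) < Module.finrank K (ι → K) := by
    simp only [Module.finrank_prod, Module.finrank_fintype_fun_eq_card, Fintype.card_coe,
      card_compl]
    have := S.card_le_univ
    omega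
  obtain ⟨x, hx, hx0⟩ := Submodule.exists_mem_ne_zero_of_ne_bot
    (LinearMap.ker_ne_bot_of_finrank_lt (f := f) hdim)
  have hfx := LinearMap.mem_ker.1 hx
  refine ⟨x, hx0, fun i hi => ?_, fun j hj => ?_⟩
  · exact congrFun (congrArg Prod.snd hfx) ⟨i, mem_compl.2 hi⟩
  · exact congrFun (congrArg Prod.fst hfx) ⟨j, hj⟩

section LinearOrderedField

variable [Field K] [LinearOrder K] [IsStrictOrderedRing K]

lemma sum_mul_sq_neg_of_ne_zero {d x : ι → K} (hx : x ≠ 0) (hd : ∀ i, x i ≠ 0 → d i < 0) :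
    ∑ i, d i * x i ^ 2 < 0 := by
  obtain ⟨i₀, hi₀⟩ := Function.ne_iff.1 hx
  refine sum_neg' (fun i _ => ?_) ⟨i₀, mem_univ _, ?_⟩
  · by_cases hi : x i = 0
    · simp [hi]
    · exact mul_nonpos_of_nonpos_of_nonneg (hd i hi).le (sq_nonneg _)
  · exact mul_neg_of_neg_of_pos (hd i₀ hi₀) (sq_pos_of_ne_zero hi₀)

lemma sum_mul_sq_nonneg_of_eq_zero {e v : ι → K} (hv : ∀ i, e i < 0 → v i = 0) :
    0 ≤ ∑ i, e i * v i ^ 2 := by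
  refine sum_nonneg fun i _ => ?_
  by_cases hi : e i < 0
  · simp [hv i hi]
  · exact mul_nonneg (not_lt.1 hi) (sq_nonneg _)

variable [DecidableEq ι]

theorem card_neg_le_of_diagonal_eq_mul_diagonal_mul_transpose {d e : ι → K} {N : Matrix ι ι K}
    (h : diagonal d = N * diagonal e * Nᵀ) :
    #{i | d i < 0} ≤ #{j | e j < 0} := by
  by_contra! hlt
  obtain ⟨x, hx0, hxd, hxe⟩ :=
    exists_ne_zero_forall_notMem_eq_zero_forall_mem_mulVec_eq_zero Nᵀ hlt
  have hquad : x ⬝ᵥ (diagonal d *ᵥ x) = (Nᵀ *ᵥ x) ⬝ᵥ (diagonal e *ᵥ (Nᵀ *ᵥ x)) := by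
    rw [h, ← mulVec_mulVec, ← mulVec_mulVec, dotProduct_mulVec, ← mulVec_transpose]
  have hneg : x ⬝ᵥ (diagonal d *ᵥ x) < 0 := by
    rw [dotProduct_diagonal_mulVec_self]
    refine sum_mul_sq_neg_of_ne_zero hx0 fun i hi => ?_
    by_contra hdi
    exact hi (hxd i (by simpa using hdi))
  have hnonneg : 0 ≤ (Nᵀ *ᵥ x) ⬝ᵥ (diagonal e *ᵥ (Nᵀ *ᵥ x)) := by
    rw [dotProduct_diagonal_mulVec_self]
    exact sum_mul_sq_nonneg_of_eq_zero fun j hj => hxe j (by simpa using hj)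
  linarith

theorem card_neg_eq_of_diagonal_eq_mul_diagonal_mul_transpose {d e : ι → K} {N : Matrix ι ι K}
    (hN : IsUnit N) (h : diagonal d = N * diagonal e * Nᵀ) :
    #{i | d i < 0} = #{j | e j < 0} := by
  have hN' : IsUnit N.det := (isUnit_iff_isUnit_det N).1 hN
  have h' : diagonal e = N⁻¹ * diagonal d * N⁻¹ᵀ := by
    rw [h, transpose_nonsing_inv, mul_assoc N, nonsing_inv_mul_cancel_left N _ hN',
      mul_nonsing_inv_cancel_right Nᵀ _ (isUnit_det_transpose N hN')]
  exact le_antisymm (card_neg_le_of_diagonal_eq_mul_diagonal_mul_transpose h)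
    (card_neg_le_of_diagonal_eq_mul_diagonal_mul_transpose h')

end LinearOrderedField

end Matrix

lemma Equiv.Perm.isUnit_permMatrix {ι R : Type*} [DecidableEq ι] [Fintype ι] [Semiring R]
    (σ : Equiv.Perm ι) : IsUnit (σ.permMatrix R) :=
  ⟨⟨σ.permMatrix R, σ⁻¹.permMatrix R,
    by rw [← Matrix.permMatrix_mul, inv_mul_cancel, Matrix.permMatrix_one],
    by rw [← Matrix.permMatrix_mul, mul_inv_cancel, Matrix.permMatrix_one]⟩, rfl⟩

lemma Matrix.isUnit_of_isLowerTriangular_of_diag_eq_one {ι R : Type*} [Fintype ι] [DecidableEq ι]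
    [LinearOrder ι] [CommRing R] {L : Matrix ι ι R} (hL : L.IsLowerTriangular)
    (hdiag : ∀ i, L i i = 1) : IsUnit L := by
  rw [isUnit_iff_isUnit_det, det_of_isLowerTriangular L hL]
  simp [hdiag]

namespace Matrix.IsHermitian

variable {ι : Type*} [Fintype ι] [DecidableEq ι]

lemma card_filter_roots_charpoly_neg {A : Matrix ι ι ℝ} (hA : A.IsHermitian) :
    Multiset.card (A.charpoly.roots.filter fun μ => μ < 0) = #{i | hA.eigenvalues i < 0} := by
  rw [hA.roots_charpoly_eq_eigenvalues, RCLike.ofReal_real_eq_id, Function.id_comp,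
    Multiset.filter_map, Multiset.card_map]
  rfl

end Matrix.IsHermitian

namespace Matrix

variable {ι : Type*} [Fintype ι] [DecidableEq ι]

theorem card_neg_eq_card_roots_charpoly_neg_of_eq_mul_diagonal_mul_transpose
    {A M : Matrix ι ι ℝ} {d : ι → ℝ} (hM : IsUnit M) (hA : A = M * diagonal d * Mᵀ) :
    #{i | d i < 0} = Multiset.card (A.charpoly.roots.filter fun μ => μ < 0) := by
  have hAh : A.IsHermitian := by
    rw [hA, ← conjTranspose_eq_transpose_of_trivial]
    exact isHermitian_mul_mul_conjTranspose M (isHermitian_diagonal d)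
  have hconj := hAh.conjStarAlgAut_star_eigenvectorUnitary
  simp only [Unitary.conjStarAlgAut_apply, Unitary.coe_star, star_star] at hconj
  rw [RCLike.ofReal_real_eq_id, Function.id_comp] at hconj
  have hU := Unitary.isUnit_coe (U := star hAh.eigenvectorUnitary)
  rw [Unitary.coe_star] at hU
  generalize (hAh.eigenvectorUnitary : Matrix ι ι ℝ) = U at hconj hU
  have hdiag : diagonal hAh.eigenvalues = (star U * M) * diagonal d * (star U * M)ᵀ := by
    rw [← hconj, hA, transpose_mul, star_eq_conjTranspose, conjTranspose_eq_transpose_of_trivial,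
      transpose_transpose]
    simp only [mul_assoc]
  rw [hAh.card_filter_roots_charpoly_neg]
  exact (card_neg_eq_of_diagonal_eq_mul_diagonal_mul_transpose (hU.mul hM) hdiag).symm

end Matrix

open Polynomial in
theorem ldlt_negative_inertia_general {n : ℕ} (A P L D : Matrix (Fin n) (Fin n) ℝ)
    (hP : ∃ σ : Equiv.Perm (Fin n), P = σ.permMatrix ℝ)
    (hLdiag : ∀ i, L i i = 1) (hLlow : ∀ i j, i < j → L i j = 0)
    (hD : D.IsDiag)
    (hA : A = P * L * D * (P * L)ᵀ) :
    (Finset.univ.filter fun i => D i i < 0).card =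
      Multiset.card (A.charpoly.roots.filter fun μ => μ < 0) := by
  obtain ⟨σ, rfl⟩ := hP
  have hL : IsUnit L :=
    isUnit_of_isLowerTriangular_of_diag_eq_one (fun i j hij => hLlow i j hij) hLdiag
  rw [← hD.diagonal_diag] at hA
  exact card_neg_eq_card_roots_charpoly_neg_of_eq_mul_diagonal_mul_transpose
    (σ.isUnit_permMatrix.mul hL) hA

open Polynomial in
/-- If `A = P L D (P L)ᵀ` with `P` a permutation matrix, `L` unit lower triangular, and `D`
diagonal with nonzero entries, then the number of negative diagonal entries of `D` equals the
number of negative eigenvalues of `A` counted with multiplicity. -/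
theorem ldlt_negative_inertia {n : ℕ} (A P L D : Matrix (Fin n) (Fin n) ℝ)
    (hP : ∃ σ : Equiv.Perm (Fin n), P = σ.permMatrix ℝ)
    (hLdiag : ∀ i, L i i = 1) (hLlow : ∀ i j, i < j → L i j = 0)
    (hD : D.IsDiag) (hDnz : ∀ i, D i i ≠ 0)
    (hA : A = P * L * D * (P * L)ᵀ) :
    (Finset.univ.filter fun i => D i i < 0).card =
      Multiset.card (A.charpoly.roots.filter fun μ => μ < 0) :=
  ldlt_negative_inertia_general A P L D hP hLdiag hLlow hD hA
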